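/- Let R be a commutative ring and Ã ∈ R^{l1×l0}, L̃ ∈ R^{l1'×l0'} matrices. Then (I_{l0} ⊗ L̃)(Ãᵀ ⊗ I_{l0'}) = (Ãᵀ ⊗ I_{l1'})(I_{l1} ⊗ L̃), so right multiplication by Ãᵀ ⊗ I_{l0'} induces a well-defined R-linear map κ : coker(I_{l0} ⊗ L̃) → coker(I_{l1} ⊗ L̃), and Hom_R(coker(Ã), coker(L̃)) is R-linearly isomorphic to the kernel of κ. -/

import Mathlib

open Matrix

section Preamble

variable {R : Type*} [Ring R]

/-- `⟨A⟩`: the left `R`-submodule of row vectors `R^{1×q}` generated by the rows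
of the matrix `A`. -/
def rowSpan {m : Type*} {q : ℕ} (A : Matrix m (Fin q) R) : Submodule R (Fin q → R) :=
  Submodule.span R (Set.range A)

theorem rowSpan_le_iff {m : Type*} {q : ℕ} {A : Matrix m (Fin q) R}
    {N : Submodule R (Fin q → R)} : rowSpan A ≤ N ↔ ∀ i, A i ∈ N := by
  rw [rowSpan, Submodule.span_le]
  exact Set.range_subset_iff

/-- A matrix `φ` with `⟨Aφ⟩ ≤ ⟨B⟩` induces an `R`-linear map
`coker A → coker B`, `x + ⟨A⟩ ↦ xφ + ⟨B⟩`. -/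
def inducedMap {m m' : Type*} {q q' : ℕ} (A : Matrix m (Fin q) R) (B : Matrix m' (Fin q') R)
    (φ : Matrix (Fin q) (Fin q') R) (h : rowSpan (A * φ) ≤ rowSpan B) :
    ((Fin q → R) ⧸ rowSpan A) →ₗ[R] ((Fin q' → R) ⧸ rowSpan B) :=
  Submodule.mapQ _ _ φ.vecMulLinear (by
    rw [rowSpan, Submodule.span_le]
    rintro _ ⟨i, rfl⟩
    have hAi : φ.vecMulLinear (A i) = (A * φ) i := by
      ext j
      simp [Matrix.vecMulLinear_apply, Matrix.mul_apply, Matrix.vecMul, dotProduct]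
    have hmem := h (Submodule.subset_span ⟨i, rfl⟩)
    simp only [SetLike.mem_coe, Submodule.mem_comap, hAi]
    exact hmem)

end Preamble

/-- The row-major vectorization `row(A) ∈ R^{1×mn}` of a matrix `A ∈ R^{m×n}`:
`row(A)_{i·n+j} = A_{ij}` (`0`-indexed). -/
def rowVec {R : Type*} [Ring R] {m n : ℕ} (A : Matrix (Fin m) (Fin n) R) :
    Fin (m * n) → R :=
  fun k => A (finProdFinEquiv.symm k).1 (finProdFinEquiv.symm k).2

/-- The Kronecker product `A ⊗ B := (a_{ij}B)`, reindexed so as to be indexed by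
`Fin (m*p)` and `Fin (n*q)` in the row-major way. -/
def kron {R : Type*} [Ring R] {m n p q : ℕ} (A : Matrix (Fin m) (Fin n) R)
    (B : Matrix (Fin p) (Fin q) R) : Matrix (Fin (m * p)) (Fin (n * q)) R :=
  Matrix.reindex finProdFinEquiv finProdFinEquiv (Matrix.kroneckerMap (· * ·) A B)

/-!
Reading a row vector of length `j * q` as a `j × q` matrix (`rowVec`), the rows of
`I_j ⊗ L̃` become the matrices with a single nonzero row, a row of `L̃`; hence
`coker (I_j ⊗ L̃) ≅ coker(L̃)ʲ ≅ Hom(R^{1×j}, coker L̃)`. Under this identification right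
multiplication by `Ãᵀ ⊗ I` is `X ↦ ÃX`, i.e. precomposition with `y ↦ yÃ`. The theorem is then
the left exactness of `Hom(-, coker L̃)` applied to the presentation
`R^{1×l1} → R^{1×l0} → coker Ã → 0`.
-/

theorem LinearMap.map_ker_eq_ker_of_comp_eq {R M N M' N' : Type*} [Semiring R]
    [AddCommMonoid M] [Module R M] [AddCommMonoid N] [Module R N]
    [AddCommMonoid M'] [Module R M'] [AddCommMonoid N'] [Module R N']
    {f : M →ₗ[R] N} {g : M' →ₗ[R] N'} (e : M ≃ₗ[R] M') (e' : N ≃ₗ[R] N')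
    (h : e'.toLinearMap ∘ₗ f = g ∘ₗ e.toLinearMap) :
    (LinearMap.ker f).map e.toLinearMap = LinearMap.ker g := by
  rw [← LinearEquiv.ker_comp e' f, h, LinearMap.ker_comp,
    Submodule.map_comap_eq_of_surjective e.surjective]

section Ring

variable {R : Type*} [Ring R]

theorem inducedMap_mk {m m' : Type*} {q q' : ℕ} (A : Matrix m (Fin q) R)
    (B : Matrix m' (Fin q') R) (φ : Matrix (Fin q) (Fin q') R) (h : rowSpan (A * φ) ≤ rowSpan B)
    (v : Fin q → R) :
    inducedMap A B φ h (Submodule.Quotient.mk v) = Submodule.Quotient.mk (v ᵥ* φ) :=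
  rfl

theorem rowSpan_mul_le {m : Type*} [Fintype m] {k q : ℕ} (M : Matrix m (Fin k) R)
    (N : Matrix (Fin k) (Fin q) R) : rowSpan (M * N) ≤ rowSpan N := by
  rw [rowSpan_le_iff]
  intro i
  rw [Matrix.mul_apply_eq_vecMul, Matrix.vecMul_eq_sum]
  exact Submodule.sum_mem _ fun t _ => Submodule.smul_mem _ _ (Submodule.subset_span ⟨t, rfl⟩)

def rowVecEquiv (m n : ℕ) : (Fin m → Fin n → R) ≃ₗ[R] (Fin (m * n) → R) where
  toFun := rowVec
  invFun v i j := v (finProdFinEquiv (i, j))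
  map_add' _ _ := rfl
  map_smul' _ _ := rfl
  left_inv X := by ext i j; simp [rowVec]
  right_inv v := by ext k; simp only [rowVec, Prod.mk.eta, Equiv.apply_symm_apply]

@[simp]
theorem coe_rowVecEquiv (m n : ℕ) : ⇑(rowVecEquiv (R := R) m n) = rowVec := rfl

theorem kron_one_apply_finProdFinEquiv {n p q : ℕ} (L : Matrix (Fin p) (Fin q) R) (i : Fin n)
    (b : Fin p) :
    kron (1 : Matrix (Fin n) (Fin n) R) L (finProdFinEquiv (i, b)) = rowVec (Pi.single i (L b)) := by
  ext k
  obtain ⟨⟨j, c⟩, rfl⟩ := finProdFinEquiv.surjective k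
  simp only [kron, rowVec, Matrix.reindex_apply, Matrix.submatrix_apply, Equiv.symm_apply_apply,
    Matrix.kroneckerMap_apply, Matrix.one_apply, Pi.single_apply]
  split_ifs <;> simp_all [eq_comm]

theorem rowSpan_kron_one (n : ℕ) {p q : ℕ} (L : Matrix (Fin p) (Fin q) R) :
    rowSpan (kron (1 : Matrix (Fin n) (Fin n) R) L)
      = (Submodule.pi Set.univ fun _ => rowSpan L).map (rowVecEquiv n q).toLinearMap := by
  classical
  have hrange : Set.range (kron (1 : Matrix (Fin n) (Fin n) R) L)
      = rowVecEquiv n q '' ⋃ i, LinearMap.single R (fun _ => Fin q → R) i '' Set.range L := by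
    ext v
    simp only [Set.mem_image, Set.mem_iUnion]
    constructor
    · rintro ⟨k, rfl⟩
      obtain ⟨⟨i, b⟩, rfl⟩ := finProdFinEquiv.surjective k
      exact ⟨_, ⟨i, _, ⟨b, rfl⟩, rfl⟩, (kron_one_apply_finProdFinEquiv L i b).symm⟩
    · rintro ⟨_, ⟨i, _, ⟨b, rfl⟩, rfl⟩, rfl⟩
      exact ⟨_, kron_one_apply_finProdFinEquiv L i b⟩
  rw [rowSpan, hrange, ← LinearEquiv.coe_toLinearMap, Submodule.span_image, Submodule.span_iUnion,
    ← Submodule.iSup_map_single]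
  simp only [rowSpan, Submodule.map_span]

end Ring

section CommRing

variable {R : Type*} [CommRing R]

theorem kron_mul_kron {m n p q r s : ℕ} (A : Matrix (Fin m) (Fin n) R)
    (B : Matrix (Fin p) (Fin q) R) (C : Matrix (Fin n) (Fin r) R) (D : Matrix (Fin q) (Fin s) R) :
    kron A B * kron C D = kron (A * C) (B * D) := by
  simp only [kron, Matrix.reindex_apply, Matrix.submatrix_mul_equiv, Matrix.mul_kronecker_mul]

theorem kron_one_mul_kron_transpose_one {l1 l0 l1' l0' : ℕ} (A : Matrix (Fin l1) (Fin l0) R)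
    (L : Matrix (Fin l1') (Fin l0') R) :
    kron (1 : Matrix (Fin l0) (Fin l0) R) L * kron Aᵀ (1 : Matrix (Fin l0') (Fin l0') R)
      = kron Aᵀ (1 : Matrix (Fin l1') (Fin l1') R) * kron (1 : Matrix (Fin l1) (Fin l1) R) L := by
  simp only [kron_mul_kron, Matrix.one_mul, Matrix.mul_one]

theorem rowVec_vecMul_kron_transpose_one {l1 l0 l0' : ℕ} (A : Matrix (Fin l1) (Fin l0) R)
    (X : Matrix (Fin l0) (Fin l0') R) :
    rowVec X ᵥ* kron Aᵀ (1 : Matrix (Fin l0') (Fin l0') R) = rowVec (A * X) := by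
  ext k
  obtain ⟨⟨i, c⟩, rfl⟩ := finProdFinEquiv.surjective k
  simp only [rowVec, Matrix.vecMul, dotProduct, ← finProdFinEquiv.sum_comp, Fintype.sum_prod_type,
    Equiv.symm_apply_apply, kron, Matrix.reindex_apply, Matrix.submatrix_apply,
    Matrix.kroneckerMap_apply, Matrix.transpose_apply, Matrix.one_apply, Matrix.mul_apply]
  simp [mul_comm]

noncomputable def cokerKronOneEquiv (n : ℕ) {p q : ℕ} (L : Matrix (Fin p) (Fin q) R) :
    ((Fin (n * q) → R) ⧸ rowSpan (kron (1 : Matrix (Fin n) (Fin n) R) L)) ≃ₗ[R]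
      ((Fin n → R) →ₗ[R] ((Fin q → R) ⧸ rowSpan L)) :=
  (Submodule.Quotient.equiv _ _ (rowVecEquiv n q).symm
      ((Submodule.map_symm_eq_iff _).mpr (rowSpan_kron_one n L).symm)).trans
    ((Submodule.quotientPi _).trans (LinearEquiv.piRing R _ (Fin n) R).symm)

theorem cokerKronOneEquiv_mk (n : ℕ) {p q : ℕ} (L : Matrix (Fin p) (Fin q) R)
    (X : Matrix (Fin n) (Fin q) R) :
    cokerKronOneEquiv n L (Submodule.Quotient.mk (rowVec X))
      = (LinearEquiv.piRing R _ (Fin n) R).symm fun i => Submodule.Quotient.mk (X i) := by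
  -- stated separately since `rw`/`simp` do not unify the domain of `rowVecEquiv` with `Matrix`
  have hX : (rowVecEquiv n q).symm (rowVecEquiv n q X) = X := (rowVecEquiv n q).symm_apply_apply X
  rw [← coe_rowVecEquiv]
  simp only [cokerKronOneEquiv, LinearEquiv.trans_apply, Submodule.Quotient.equiv_apply,
    Submodule.mapQ_apply, LinearEquiv.coe_coe, hX]
  rfl

theorem cokerKronOneEquiv_comp_inducedMap {l1 l0 l1' l0' : ℕ} (A : Matrix (Fin l1) (Fin l0) R)
    (L : Matrix (Fin l1') (Fin l0') R)
    (h : rowSpan (kron (1 : Matrix (Fin l0) (Fin l0) R) L *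
      kron Aᵀ (1 : Matrix (Fin l0') (Fin l0') R)) ≤ rowSpan (kron (1 : Matrix (Fin l1) (Fin l1) R) L)) :
    (cokerKronOneEquiv l1 L).toLinearMap ∘ₗ
        inducedMap (kron (1 : Matrix (Fin l0) (Fin l0) R) L)
          (kron (1 : Matrix (Fin l1) (Fin l1) R) L) (kron Aᵀ (1 : Matrix (Fin l0') (Fin l0') R)) h
      = LinearMap.lcomp R _ A.vecMulLinear ∘ₗ (cokerKronOneEquiv l0 L).toLinearMap := by
  refine Submodule.linearMap_qext _ (LinearMap.ext fun v => ?_)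
  obtain ⟨X, rfl⟩ : ∃ X : Matrix (Fin l0) (Fin l0') R, rowVec X = v :=
    (rowVecEquiv l0 l0').surjective v
  simp only [LinearMap.comp_apply, Submodule.mkQ_apply, LinearEquiv.coe_coe, inducedMap_mk,
    rowVec_vecMul_kron_transpose_one, cokerKronOneEquiv_mk]
  ext i
  simp [Matrix.mul_apply_eq_vecMul, Matrix.vecMul_eq_sum, ← Submodule.mkQ_apply]

noncomputable def homCokerEquivKerLcomp {m : Type*} [Fintype m] {q : ℕ}
    (A : Matrix m (Fin q) R) (Q : Type*) [AddCommGroup Q] [Module R Q] :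
    (((Fin q → R) ⧸ rowSpan A) →ₗ[R] Q) ≃ₗ[R] LinearMap.ker (LinearMap.lcomp R Q A.vecMulLinear) :=
  have hexact : Function.Exact A.vecMulLinear (rowSpan A).mkQ :=
    LinearMap.exact_iff.mpr (by rw [Submodule.ker_mkQ, range_vecMulLinear]; rfl)
  (LinearEquiv.ofInjective _
      (LinearMap.lcomp_injective_of_surjective _ (Submodule.mkQ_surjective _))).trans
    (LinearEquiv.ofEq _ _ (LinearMap.exact_lcomp_of_exact_of_surjective Q hexact
      (Submodule.mkQ_surjective _)).linearMap_ker_eq.symm)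

end CommRing

/-- `(I_{l0} ⊗ L̃)(Ãᵀ ⊗ I_{l0'}) = (Ãᵀ ⊗ I_{l1'})(I_{l1} ⊗ L̃)`, so right
multiplication by `Ãᵀ ⊗ I_{l0'}` induces a map `κ : coker(I_{l0} ⊗ L̃) → coker(I_{l1} ⊗ L̃)`,
and `Hom_R(coker Ã, coker L̃)` is isomorphic to the kernel of `κ`. -/
theorem statement_13 {R : Type*} [CommRing R] {l1 l0 l1' l0' : ℕ}
    (A : Matrix (Fin l1) (Fin l0) R) (L : Matrix (Fin l1') (Fin l0') R) :
    (kron (1 : Matrix (Fin l0) (Fin l0) R) L * kron Aᵀ (1 : Matrix (Fin l0') (Fin l0') R)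
      = kron Aᵀ (1 : Matrix (Fin l1') (Fin l1') R) * kron (1 : Matrix (Fin l1) (Fin l1) R) L) ∧
    ∃ h : rowSpan (kron (1 : Matrix (Fin l0) (Fin l0) R) L *
          kron Aᵀ (1 : Matrix (Fin l0') (Fin l0') R))
        ≤ rowSpan (kron (1 : Matrix (Fin l1) (Fin l1) R) L),
      Nonempty (((((Fin l0 → R) ⧸ rowSpan A)) →ₗ[R] ((Fin l0' → R) ⧸ rowSpan L)) ≃ₗ[R]
        LinearMap.ker (inducedMap (kron (1 : Matrix (Fin l0) (Fin l0) R) L)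
          (kron (1 : Matrix (Fin l1) (Fin l1) R) L)
          (kron Aᵀ (1 : Matrix (Fin l0') (Fin l0') R)) h)) := by
  have hcomm := kron_one_mul_kron_transpose_one A L
  have h : rowSpan (kron (1 : Matrix (Fin l0) (Fin l0) R) L *
      kron Aᵀ (1 : Matrix (Fin l0') (Fin l0') R))
        ≤ rowSpan (kron (1 : Matrix (Fin l1) (Fin l1) R) L) :=
    hcomm ▸ rowSpan_mul_le _ _
  have hker := LinearMap.map_ker_eq_ker_of_comp_eq _ _ (cokerKronOneEquiv_comp_inducedMap A L h)
  exact ⟨hcomm, h, ⟨(homCokerEquivKerLcomp A _).trans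
    (LinearEquiv.ofSubmodules (cokerKronOneEquiv l0 L) _ _ hker).symm⟩⟩
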